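/- For every bicolored point set S of n ≥ 2 points in the plane in general position containing at least one red and at least one blue point, every minimum bichromatic spanning tree of S has at most ⌊n²/4⌋ − n + 1 crossings, where a crossing is an unordered pair of distinct edges of the tree that cross each other. -/

import Mathlib

open scoped Classical

noncomputable section

/-- Points in the Euclidean plane. -/
abbrev Pt : Type := EuclideanSpace ℝ (Fin 2)

/-- `S` is in general position: no three (distinct) points of `S` are collinear. -/
def GenPos (S : Finset Pt) : Prop :=
  ∀ p ∈ S, ∀ q ∈ S, ∀ r ∈ S, p ≠ q → p ≠ r → q ≠ r →
    ¬ Collinear ℝ ({p, q, r} : Set Pt)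

/-- The closed segments `[a,b]` and `[c,d]` cross: they share a point that is
interior to both segments. -/
def SegCross (a b c d : Pt) : Prop :=
  ∃ p : Pt, p ∈ openSegment ℝ a b ∧ p ∈ openSegment ℝ c d

/-- Two unordered edges (over vertices lying in the plane) cross. -/
def EdgeCross {S : Finset Pt} (e₁ e₂ : Sym2 ↥S) : Prop :=
  ∃ a b c d : ↥S, e₁ = s(a, b) ∧ e₂ = s(c, d) ∧ SegCross ↑a ↑b ↑c ↑d

/-- A (straight-line drawn) graph is plane if no two of its edges cross. -/
def PlaneGraph {S : Finset Pt} (G : SimpleGraph ↥S) : Prop :=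
  ∀ e₁ ∈ G.edgeSet, ∀ e₂ ∈ G.edgeSet, e₁ ≠ e₂ → ¬ EdgeCross e₁ e₂

/-- Every edge has one red (`true`) and one blue (`false`) endpoint. -/
def Bichromatic {S : Finset Pt} (col : Pt → Bool) (G : SimpleGraph ↥S) : Prop :=
  ∀ u v : ↥S, G.Adj u v → col ↑u ≠ col ↑v

/-- The Euclidean length of an unordered edge. -/
def edgeLen {S : Finset Pt} : Sym2 ↥S → ℝ :=
  Sym2.lift ⟨fun a b => dist (a : Pt) (b : Pt), fun _ _ => dist_comm _ _⟩

/-- The total Euclidean length of the edges of a graph drawn with straight-line edges. -/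
def graphLen {S : Finset Pt} (G : SimpleGraph ↥S) : ℝ :=
  ∑ᶠ e ∈ G.edgeSet, edgeLen e

/-- A bichromatic spanning tree of `S`. -/
def IsBST {S : Finset Pt} (col : Pt → Bool) (G : SimpleGraph ↥S) : Prop :=
  G.IsTree ∧ Bichromatic col G

/-- A minimum bichromatic spanning tree of `S`. -/
def IsMinBST {S : Finset Pt} (col : Pt → Bool) (G : SimpleGraph ↥S) : Prop :=
  IsBST col G ∧ ∀ G' : SimpleGraph ↥S, IsBST col G' → graphLen G ≤ graphLen G'

/-- The set of crossings of a graph: unordered pairs of distinct edges that cross. -/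
def Crossings {S : Finset Pt} (G : SimpleGraph ↥S) : Set (Sym2 (Sym2 ↥S)) :=
  {p | ∃ e₁ e₂ : Sym2 ↥S, p = s(e₁, e₂) ∧ e₁ ∈ G.edgeSet ∧ e₂ ∈ G.edgeSet ∧
    e₁ ≠ e₂ ∧ EdgeCross e₁ e₂}

/-! Let `ab`, `cd` be crossing edges of a minimum bichromatic spanning tree `T`, with `a`, `c`
red. Crossing segments satisfy the strict inequality `|ad| + |cb| < |ab| + |cd|`, so by the cycle
property of `T` one of the red–blue pairs `(a, d)`, `(c, b)` is separated in `T` by both crossing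
edges; these are then the first and the last edge of its tree path. The crossing is thus determined
by a red–blue pair that is not an edge of `T`, and there are at most
`r * b - (n - 1) ≤ n² / 4 - n + 1` of them, where `r + b = n` count the red and the blue points. -/

open Finset SimpleGraph

section Geometry

variable {E : Type*} [NormedAddCommGroup E] [NormedSpace ℝ E]

theorem collinear_of_mem_openSegment_of_wbtw {a b d p : E} (hb : p ∈ openSegment ℝ a b)
    (hd : Wbtw ℝ a p d) : Collinear ℝ ({a, b, d} : Set E) := by
  rcases eq_or_ne a b with rfl | hab
  · simpa using collinear_pair ℝ a d
  have hpa : a ≠ p := by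
    rintro rfl
    exact hab (left_mem_openSegment_iff.1 hb)
  have hapb : Collinear ℝ ({a, p, b} : Set E) :=
    (mem_segment_iff_wbtw.1 (openSegment_subset_segment ℝ a b hb)).collinear
  have hdapb : Collinear ℝ ({d, a, p, b} : Set E) := by
    rw [hapb.collinear_insert_iff_of_ne (by simp) (by simp) hpa, Set.insert_comm,
      Set.pair_comm]
    exact hd.collinear
  exact hdapb.subset (by intro z; simp only [Set.mem_insert_iff, Set.mem_singleton_iff]; tauto)

theorem dist_add_dist_lt_of_mem_openSegment [StrictConvexSpace ℝ E] {a b c d p : E}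
    (hab : p ∈ openSegment ℝ a b) (hcd : p ∈ openSegment ℝ c d)
    (hcol : ¬ Collinear ℝ ({a, b, d} : Set E)) :
    dist a d + dist c b < dist a b + dist c d := by
  have h₁ : dist a p + dist p b = dist a b :=
    dist_add_dist_eq_iff.2 (mem_segment_iff_wbtw.1 (openSegment_subset_segment ℝ a b hab))
  have h₂ : dist c p + dist p d = dist c d :=
    dist_add_dist_eq_iff.2 (mem_segment_iff_wbtw.1 (openSegment_subset_segment ℝ c d hcd))
  have h₃ : dist a d < dist a p + dist p d :=
    dist_lt_dist_add_dist_iff.2 fun h ↦ hcol (collinear_of_mem_openSegment_of_wbtw hab h)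
  linarith [dist_triangle c p b]

end Geometry

theorem Sym2.eq_and_eq_of_mk_eq_mk_of_ne {α : Type*} {x y x' y' : α}
    (h : s(x, y) = s(x', y')) (hne : x ≠ y') : x = x' ∧ y = y' := by
  rcases Sym2.eq_iff.1 h with h | ⟨h, -⟩
  exacts [h, absurd h hne]

namespace SimpleGraph

variable {V : Type*} {G : SimpleGraph V} {p q u v x y : V}

theorem Reachable.elim_sup_edge (h : (G ⊔ edge p q).Reachable u v) :
    G.Reachable u v ∨ (G.Reachable u p ∧ G.Reachable q v) ∨
      (G.Reachable u q ∧ G.Reachable p v) := by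
  obtain ⟨w⟩ := h
  induction w with
  | nil => exact .inl .rfl
  | cons hadj _ ih =>
    rcases hadj with hadj | hadj
    · have := hadj.reachable
      rcases ih with h | h | h
      exacts [.inl (this.trans h), .inr (.inl ⟨this.trans h.1, h.2⟩),
        .inr (.inr ⟨this.trans h.1, h.2⟩)]
    · obtain ⟨⟨rfl, rfl⟩ | ⟨rfl, rfl⟩, -⟩ := (edge_adj ..).1 hadj
      · rcases ih with h | h | h
        exacts [.inr (.inl ⟨.rfl, h⟩), .inl (h.1.symm.trans h.2), .inl h.2]
      · rcases ih with h | h | h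
        exacts [.inr (.inr ⟨.rfl, h⟩), .inl h.2, .inl (h.1.symm.trans h.2)]

theorem Connected.connected_deleteEdges_sup_edge (hG : G.Connected) {e : Sym2 V}
    (hxy : ¬(G.deleteEdges {e}).Reachable x y) : (G.deleteEdges {e} ⊔ edge x y).Connected := by
  obtain ⟨p, q⟩ := e
  set H := G.deleteEdges {s(p, q)}
  have hle : G ≤ H ⊔ edge p q := by
    rw [sup_comm]; exact le_sup_sdiff
  have hpq : (H ⊔ edge x y).Reachable p q := by
    have hx : (H ⊔ edge x y).Reachable x y :=
      Adj.reachable (Or.inr ((edge_adj ..).2 ⟨.inl ⟨rfl, rfl⟩, fun h ↦ hxy (h ▸ .rfl)⟩))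
    rcases ((hG x y).mono hle).elim_sup_edge with h | ⟨hxp, hqy⟩ | ⟨hxq, hpy⟩
    · exact absurd h hxy
    · exact (hxp.mono le_sup_left).symm.trans (hx.trans (hqy.mono le_sup_left).symm)
    · exact (hpy.mono le_sup_left).trans (hx.symm.trans (hxq.mono le_sup_left))
  have := hG.nonempty
  refine ⟨fun u v ↦ ?_⟩
  rcases ((hG u v).mono (hle.trans (sup_le_sup_right le_sup_left _))).elim_sup_edge with
    h | h | h
  exacts [h, h.1.trans (hpq.trans h.2), h.1.trans (hpq.symm.trans h.2)]

theorem eq_of_not_reachable_deleteEdges (hxy : G.Reachable x y) {g g' : Sym2 V}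
    (hg : x ∈ g) (hg' : x ∈ g') (hsep : ¬(G.deleteEdges {g}).Reachable x y)
    (hsep' : ¬(G.deleteEdges {g'}).Reachable x y) : g = g' := by
  obtain ⟨P, hP⟩ := hxy.exists_isPath
  obtain ⟨u, rfl⟩ := Sym2.mem_iff_exists.1 hg
  obtain ⟨u', rfl⟩ := Sym2.mem_iff_exists.1 hg'
  rw [hP.eq_snd_of_mem_edges (P.mem_edges_of_not_reachable_deleteEdges hsep),
    hP.eq_snd_of_mem_edges (P.mem_edges_of_not_reachable_deleteEdges hsep')]

/-- `g` and `h` are the first and the last edge of every path from `x` to `y`. -/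
def SeparatesAtEnds (G : SimpleGraph V) (x y : V) (g h : Sym2 V) : Prop :=
  x ∈ g ∧ y ∈ h ∧ ¬(G.deleteEdges {g}).Reachable x y ∧ ¬(G.deleteEdges {h}).Reachable x y

theorem SeparatesAtEnds.unique {g h g' h' : Sym2 V} (hxy : G.Reachable x y)
    (hs : G.SeparatesAtEnds x y g h) (hs' : G.SeparatesAtEnds x y g' h') : g = g' ∧ h = h' :=
  ⟨eq_of_not_reachable_deleteEdges hxy hs.1 hs'.1 hs.2.2.1 hs'.2.2.1,
    eq_of_not_reachable_deleteEdges hxy.symm hs.2.1 hs'.2.1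
      (reachable_comm.not.1 hs.2.2.2) (reachable_comm.not.1 hs'.2.2.2)⟩

theorem SeparatesAtEnds.not_adj {g h : Sym2 V} (hs : G.SeparatesAtEnds x y g h) (hgh : g ≠ h) :
    ¬G.Adj x y := by
  intro hadj
  by_cases hg : s(x, y) = g
  · exact hs.2.2.2 (deleteEdges_adj.2 ⟨hadj, by simpa [hg] using hgh⟩).reachable
  · exact hs.2.2.1 (deleteEdges_adj.2 ⟨hadj, hg⟩).reachable

end SimpleGraph

section MinBST

variable {S : Finset Pt} {col : Pt → Bool} {G H T : SimpleGraph ↥S}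

theorem GenPos.not_collinear (hgp : GenPos S) {a b c : ↥S} (hab : a ≠ b) (hac : a ≠ c)
    (hbc : b ≠ c) : ¬ Collinear ℝ ({(a : Pt), (b : Pt), (c : Pt)} : Set Pt) :=
  hgp a a.2 b b.2 c c.2 (Subtype.coe_ne_coe.2 hab) (Subtype.coe_ne_coe.2 hac)
    (Subtype.coe_ne_coe.2 hbc)

theorem edgeCross_mk_iff {a b c d : ↥S} : EdgeCross s(a, b) s(c, d) ↔ SegCross a b c d := by
  refine ⟨?_, fun h ↦ ⟨a, b, c, d, rfl, rfl, h⟩⟩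
  rintro ⟨a', b', c', d', h₁, h₂, p, hp₁, hp₂⟩
  rcases Sym2.eq_iff.1 h₁ with ⟨rfl, rfl⟩ | ⟨rfl, rfl⟩ <;>
    rcases Sym2.eq_iff.1 h₂ with ⟨rfl, rfl⟩ | ⟨rfl, rfl⟩ <;>
    exact ⟨p, by simpa only [openSegment_symm] using hp₁,
      by simpa only [openSegment_symm] using hp₂⟩

theorem Bichromatic.exists_eq_mk (hG : Bichromatic col G) {e : Sym2 ↥S} (he : e ∈ G.edgeSet) :
    ∃ r b, e = s(r, b) ∧ G.Adj r b ∧ col r = true ∧ col b = false := by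
  obtain ⟨u, v⟩ := e
  have huv := hG u v he
  cases hu : col u
  · exact ⟨v, u, Sym2.eq_swap, G.adj_symm he, by cases hv : col v <;> simp_all, hu⟩
  · exact ⟨u, v, rfl, he, hu, by cases hv : col v <;> simp_all⟩

@[simp]
theorem edgeLen_mk (a b : ↥S) : edgeLen s(a, b) = dist (a : Pt) b := rfl

theorem edgeLen_nonneg (e : Sym2 ↥S) : 0 ≤ edgeLen e := by
  obtain ⟨a, b⟩ := e
  exact dist_nonneg (x := (a : Pt))

theorem graphLen_eq_sum (G : SimpleGraph ↥S) : graphLen G = ∑ e ∈ G.edgeFinset, edgeLen e := by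
  rw [graphLen, ← coe_edgeFinset, finsum_mem_coe_finset]

theorem graphLen_le_of_le_deleteEdges_sup_edge {e : Sym2 ↥S} {x y : ↥S} (he : e ∈ G.edgeSet)
    (hH : H ≤ G.deleteEdges {e} ⊔ edge x y) :
    graphLen H ≤ graphLen G - edgeLen e + dist (x : Pt) y := by
  have hsub : H.edgeFinset ⊆ insert s(x, y) (G.edgeFinset.erase e) := by
    intro f hf
    have := edgeSet_mono hH (mem_edgeFinset.1 hf)
    simp only [edgeSet_sup, edgeSet_deleteEdges, edgeSet_edge, Set.mem_union, Set.mem_sdiff,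
      Set.mem_singleton_iff] at this
    simp only [mem_insert, mem_erase, mem_edgeFinset]
    tauto
  have hinsert : ∑ f ∈ insert s(x, y) (G.edgeFinset.erase e), edgeLen f ≤
      edgeLen s(x, y) + ∑ f ∈ G.edgeFinset.erase e, edgeLen f := by
    by_cases hmem : s(x, y) ∈ G.edgeFinset.erase e
    · rw [insert_eq_of_mem hmem]
      linarith [edgeLen_nonneg s(x, y)]
    · rw [sum_insert hmem]
  rw [graphLen_eq_sum, graphLen_eq_sum, ← sum_erase_add _ _ (mem_edgeFinset.2 he)]
  have := sum_le_sum_of_subset_of_nonneg hsub fun f _ _ ↦ edgeLen_nonneg f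
  simp only [edgeLen_mk] at hinsert
  linarith

/-- The cycle property: `T - e + xy` is connected, hence contains a bichromatic spanning tree. -/
theorem IsMinBST.edgeLen_le_dist (hT : IsMinBST col T) {e : Sym2 ↥S} {x y : ↥S}
    (he : e ∈ T.edgeSet) (hxy : col x ≠ col y) (hsep : ¬(T.deleteEdges {e}).Reachable x y) :
    edgeLen e ≤ dist (x : Pt) y := by
  obtain ⟨H, hle, hH⟩ :=
    (hT.1.1.connected.connected_deleteEdges_sup_edge hsep).exists_isTree_le
  have hbi : Bichromatic col H := by
    intro u v huv
    rcases hle huv with huv | huv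
    · exact hT.1.2 u v huv.1
    · obtain ⟨⟨rfl, rfl⟩ | ⟨rfl, rfl⟩, -⟩ := (edge_adj ..).1 huv
      exacts [hxy, hxy.symm]
  linarith [hT.2 H ⟨hH, hbi⟩, graphLen_le_of_le_deleteEdges_sup_edge he hle]

theorem IsMinBST.separatesAtEnds_or (hgp : GenPos S) (hT : IsMinBST col T) {a b c d : ↥S}
    (hab : T.Adj a b) (hcd : T.Adj c d) (hne : s(a, b) ≠ s(c, d)) (hcross : SegCross a b c d)
    (ha : col a = true) (hb : col b = false) (hc : col c = true) (hd : col d = false) :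
    T.SeparatesAtEnds a d s(a, b) s(c, d) ∨ T.SeparatesAtEnds c b s(c, d) s(a, b) := by
  obtain ⟨p, hp₁, hp₂⟩ := hcross
  have hbd : b ≠ d := by
    rintro rfl
    have hac : a ≠ c := by rintro rfl; exact hne rfl
    rw [openSegment_symm] at hp₁ hp₂
    exact hgp.not_collinear hab.ne.symm hcd.ne.symm hac
      (collinear_of_mem_openSegment_of_wbtw hp₁
        (mem_segment_iff_wbtw.1 (openSegment_subset_segment ℝ _ _ hp₂)))
  have had : a ≠ d := ne_of_apply_ne (fun v : ↥S ↦ col v) (by simp [ha, hd])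
  have hquad : dist (a : Pt) d + dist (c : Pt) b < dist (a : Pt) b + dist (c : Pt) d :=
    dist_add_dist_lt_of_mem_openSegment hp₁ hp₂ (hgp.not_collinear hab.ne had hbd)
  have hsep₁ : ¬(T.deleteEdges {s(a, b)}).Reachable a b :=
    isBridge_iff.1 (isAcyclic_iff_forall_adj_isBridge.1 hT.1.1.isAcyclic hab)
  have hsep₂ : ¬(T.deleteEdges {s(c, d)}).Reachable c d :=
    isBridge_iff.1 (isAcyclic_iff_forall_adj_isBridge.1 hT.1.1.isAcyclic hcd)
  have hcd' : (T.deleteEdges {s(a, b)}).Adj c d := deleteEdges_adj.2 ⟨hcd, hne.symm⟩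
  have hab' : (T.deleteEdges {s(c, d)}).Adj a b := deleteEdges_adj.2 ⟨hab, hne⟩
  have key₁ : ¬(T.deleteEdges {s(a, b)}).Reachable a d ∨
      ¬(T.deleteEdges {s(a, b)}).Reachable c b := by
    by_contra! h
    exact hsep₁ (h.1.trans (hcd'.reachable.symm.trans h.2))
  have key₂ : ¬(T.deleteEdges {s(c, d)}).Reachable a d ∨
      ¬(T.deleteEdges {s(c, d)}).Reachable c b := by
    by_contra! h
    exact hsep₂ (h.2.trans (hab'.reachable.symm.trans h.1))
  have hcol_ad : col a ≠ col d := by simp [ha, hd]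
  have hcol_cb : col c ≠ col b := by simp [hc, hb]
  -- In the two mixed cases the cycle property gives `|ab| + |cd| ≤ |ad| + |cb|`, against `hquad`.
  rcases key₁ with h₁ | h₁ <;> rcases key₂ with h₂ | h₂
  · exact .inl ⟨Sym2.mem_mk_left _ _, Sym2.mem_mk_right _ _, h₁, h₂⟩
  · have := hT.edgeLen_le_dist hab hcol_ad h₁
    have := hT.edgeLen_le_dist hcd hcol_cb h₂
    simp only [edgeLen_mk] at *
    linarith
  · have := hT.edgeLen_le_dist hab hcol_cb h₁
    have := hT.edgeLen_le_dist hcd hcol_ad h₂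
    simp only [edgeLen_mk] at *
    linarith
  · exact .inr ⟨Sym2.mem_mk_left _ _, Sym2.mem_mk_right _ _, h₂, h₁⟩

theorem IsMinBST.exists_separatesAtEnds (hgp : GenPos S) (hT : IsMinBST col T)
    {e₁ e₂ : Sym2 ↥S} (h₁ : e₁ ∈ T.edgeSet) (h₂ : e₂ ∈ T.edgeSet) (hne : e₁ ≠ e₂)
    (hcross : EdgeCross e₁ e₂) :
    ∃ (x y : ↥S) (g h : Sym2 ↥S), col x = true ∧ col y = false ∧ s(g, h) = s(e₁, e₂) ∧
      T.SeparatesAtEnds x y g h := by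
  obtain ⟨a, b, rfl, hab, ha, hb⟩ := hT.1.2.exists_eq_mk h₁
  obtain ⟨c, d, rfl, hcd, hc, hd⟩ := hT.1.2.exists_eq_mk h₂
  rcases hT.separatesAtEnds_or hgp hab hcd hne (edgeCross_mk_iff.1 hcross) ha hb hc hd with h | h
  · exact ⟨a, d, _, _, ha, hd, rfl, h⟩
  · exact ⟨c, b, _, _, hc, hb, Sym2.eq_swap, h⟩

def redBluePairs (S : Finset Pt) (col : Pt → Bool) : Finset (Sym2 ↥S) :=
  ((univ.filter fun x : ↥S ↦ col x = true) ×ˢ (univ.filter fun y : ↥S ↦ col y = false)).image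
    fun q ↦ s(q.1, q.2)

theorem mk_mem_redBluePairs {x y : ↥S} (hx : col x = true) (hy : col y = false) :
    s(x, y) ∈ redBluePairs S col :=
  mem_image.2 ⟨(x, y), by simp [hx, hy], rfl⟩

theorem Bichromatic.edgeFinset_subset_redBluePairs (hG : Bichromatic col G) :
    G.edgeFinset ⊆ redBluePairs S col := by
  intro e he
  obtain ⟨r, b, rfl, -, hr, hb⟩ := hG.exists_eq_mk (mem_edgeFinset.1 he)
  exact mk_mem_redBluePairs hr hb

theorem four_mul_card_redBluePairs_le : 4 * #(redBluePairs S col) ≤ #S ^ 2 := by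
  set R := univ.filter fun x : ↥S ↦ col x = true
  set B := univ.filter fun y : ↥S ↦ col y = false
  have hinj : Set.InjOn (fun q : ↥S × ↥S ↦ s(q.1, q.2)) ↑(R ×ˢ B) := by
    rintro ⟨x, y⟩ hxy ⟨x', y'⟩ hxy' h
    simp only [coe_product, Set.mem_prod, mem_coe, mem_filter, mem_univ, true_and, R, B]
      at hxy hxy'
    obtain ⟨rfl, rfl⟩ := Sym2.eq_and_eq_of_mk_eq_mk_of_ne h
      (ne_of_apply_ne (fun v : ↥S ↦ col v) (by simp [hxy.1, hxy'.2]))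
    rfl
  have hRB : #R + #B = #S := by
    simpa [R, B] using card_filter_add_card_filter_not (s := univ)
      (fun x : ↥S ↦ col x = true)
  rw [redBluePairs, card_image_of_injOn hinj, card_product, ← hRB]
  nlinarith [sq_nonneg ((#R : ℤ) - #B)]

theorem IsMinBST.card_crossings_le (hgp : GenPos S) (hT : IsMinBST col T) :
    Nat.card (Crossings T) ≤ #(redBluePairs S col \ T.edgeFinset) := by
  have hwit : ∀ p : Crossings T, ∃ (x y : ↥S) (g h : Sym2 ↥S), col x = true ∧ col y = false ∧
      p.1 = s(g, h) ∧ g ≠ h ∧ T.SeparatesAtEnds x y g h := by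
    rintro ⟨_, e₁, e₂, rfl, h₁, h₂, hne, hcross⟩
    obtain ⟨x, y, g, h, hx, hy, hgh, hs⟩ := hT.exists_separatesAtEnds hgp h₁ h₂ hne hcross
    refine ⟨x, y, g, h, hx, hy, hgh.symm, ?_, hs⟩
    rintro rfl
    rcases Sym2.eq_iff.1 hgh with ⟨rfl, rfl⟩ | ⟨rfl, rfl⟩ <;> exact hne rfl
  choose x y g h hx hy hp hgh hs using hwit
  let F : Crossings T → ↥(redBluePairs S col \ T.edgeFinset) := fun p ↦
    ⟨s(x p, y p), mem_sdiff.2 ⟨mk_mem_redBluePairs (hx p) (hy p),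
      fun hmem ↦ (hs p).not_adj (hgh p) (mem_edgeFinset.1 hmem)⟩⟩
  have hF : Function.Injective F := by
    intro p q hpq
    obtain ⟨hxpq, hypq⟩ := Sym2.eq_and_eq_of_mk_eq_mk_of_ne (congrArg Subtype.val hpq)
      (ne_of_apply_ne (fun v : ↥S ↦ col v) (by simp [hx p, hy q]))
    have hsq := hs q
    rw [← hxpq, ← hypq] at hsq
    obtain ⟨hg, hh⟩ := (hs p).unique (hT.1.1.connected.preconnected _ _) hsq
    exact Subtype.ext (by rw [hp p, hp q, hg, hh])
  exact (Nat.card_le_card_of_injective F hF).trans_eq (Nat.card_eq_finsetCard _)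

end MinBST

theorem minBST_crossings_le_general
    (S : Finset Pt) (col : Pt → Bool) (hgp : GenPos S)
    (T : SimpleGraph ↥S) (hT : IsMinBST col T) :
    (Nat.card (Crossings T) : ℤ) ≤ (S.card : ℤ) ^ 2 / 4 - S.card + 1 := by
  have hcross := hT.card_crossings_le hgp
  have hpairs : 4 * #(redBluePairs S col) ≤ #S ^ 2 := four_mul_card_redBluePairs_le
  have hsub := hT.1.2.edgeFinset_subset_redBluePairs
  have hedges : #T.edgeFinset + 1 = #S := by simpa using hT.1.1.card_edgeFinset
  rw [card_sdiff_of_subset hsub] at hcross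
  have := card_le_card hsub
  rw [← Nat.cast_pow]
  omega

/-- For every bicolored set of `n ≥ 2` points in general position
with at least one red and one blue point, every minimum bichromatic spanning tree
has at most `⌊n²/4⌋ − n + 1` crossings. -/
theorem minBST_crossings_le
    (S : Finset Pt) (col : Pt → Bool) (hgp : GenPos S) (hn : 2 ≤ S.card)
    (hred : ∃ r ∈ S, col r = true) (hblue : ∃ b ∈ S, col b = false)
    (T : SimpleGraph ↥S) (hT : IsMinBST col T) :
    (Nat.card (Crossings T) : ℤ) ≤ (S.card : ℤ) ^ 2 / 4 - S.card + 1 :=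
  minBST_crossings_le_general S col hgp T hT
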